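/- arXiv:1408.2596 — 2 statements merged into one kernel-verified Lean document; each statement's English description precedes it below -/
import Mathlib

section
/- Let X and Y be topological spaces and φ : X → Y a set function. Then φ is continuous if and only if for all closed subsets U of X and V of Y, closure(φ(U)) ⊆ V ⟺ U ⊆ closure(φ⁻¹(V)). -/
theorem stmt_7 {X Y : Type*} [TopologicalSpace X] [TopologicalSpace Y] (φ : X → Y) :
    Continuous φ ↔
      ∀ (U : Set X) (V : Set Y), IsClosed U → IsClosed V →
        (closure (φ '' U) ⊆ V ↔ U ⊆ closure (φ ⁻¹' V)) := by
  constructor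
  · intro hφ U V hU hV
    constructor
    · intro h
      refine (Set.image_subset_iff.mp (subset_closure.trans h)).trans subset_closure
    · intro h
      rw [(hV.preimage hφ).closure_eq] at h
      exact hV.closure_subset_iff.mpr (Set.image_subset_iff.mpr h)
  · intro h
    rw [continuous_iff_isClosed]
    intro V hV
    have := (h (closure (φ ⁻¹' V)) V isClosed_closure hV).mpr subset_rfl
    have h2 : closure (φ ⁻¹' V) ⊆ φ ⁻¹' V :=
      Set.image_subset_iff.mp (subset_closure.trans this)
    exact subset_closure.antisymm h2 ▸ isClosed_closure
end

section
/- Let X and Y be topological spaces and φ : X → Y a set function. Regard Closed(X) and Closed(Y) as categories (posets under inclusion). Then φ is continuous if and only if the functor T_φ : Closed(X) → Closed(Y), U ↦ closure(φ(U)), is left adjoint to the functor T^φ : Closed(Y) → Closed(X), V ↦ closure(φ⁻¹(V)). -/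
open CategoryTheory

theorem stmt_11 {X Y : Type*} [TopologicalSpace X] [TopologicalSpace Y] (φ : X → Y)
    (Tφ : Monotone (fun U : TopologicalSpace.Closeds X =>
      (⟨closure (φ '' (U : Set X)), isClosed_closure⟩ : TopologicalSpace.Closeds Y)))
    (Tψ : Monotone (fun V : TopologicalSpace.Closeds Y =>
      (⟨closure (φ ⁻¹' (V : Set Y)), isClosed_closure⟩ : TopologicalSpace.Closeds X))) :
    Continuous φ ↔ Nonempty (Tφ.functor ⊣ Tψ.functor) := by
  constructor
  · intro hφ
    have gc : GaloisConnection
        (fun U : TopologicalSpace.Closeds X =>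
          (⟨closure (φ '' (U : Set X)), isClosed_closure⟩ : TopologicalSpace.Closeds Y))
        (fun V : TopologicalSpace.Closeds Y =>
          (⟨closure (φ ⁻¹' (V : Set Y)), isClosed_closure⟩ : TopologicalSpace.Closeds X)) := by
      intro U V
      show closure (φ '' (U : Set X)) ⊆ V ↔ (U : Set X) ⊆ closure (φ ⁻¹' (V : Set Y))
      have hpre : closure (φ ⁻¹' (V : Set Y)) = φ ⁻¹' (V : Set Y) :=
        (V.2.preimage hφ).closure_eq
      rw [hpre]
      constructor
      · intro h
        exact fun x hx => h (subset_closure (Set.mem_image_of_mem φ hx))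
      · intro h
        exact V.2.closure_subset_iff.mpr (Set.image_subset_iff.mpr h)
    exact ⟨gc.adjunction⟩
  · rintro ⟨adj⟩
    have gc := adj.gc
    rw [continuous_iff_isClosed]
    intro V hV
    have key := (gc ⟨closure (φ ⁻¹' V), isClosed_closure⟩ ⟨V, hV⟩).mpr (le_refl _)
    have h1 : closure (φ '' closure (φ ⁻¹' V)) ⊆ V := key
    have h2 : closure (φ ⁻¹' V) ⊆ φ ⁻¹' V := by
      intro x hx
      exact h1 (subset_closure (Set.mem_image_of_mem φ hx))
    rw [show φ ⁻¹' V = closure (φ ⁻¹' V) from subset_antisymm subset_closure h2]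
    exact isClosed_closure
end
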